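/- arXiv:1503.02849 — 2 statements merged into one kernel-verified Lean document; each statement's English description precedes it below -/
import Mathlib

section
/- The absolutely continuous part m_{α,β}(dx) = β e^{-α-βx} √(α/(βx)) I₁(2√(αβx)) dx of the Bessel distribution has total mass m_{α,β}([0,∞)) = 1 - e^{-α}, and for every u with Re u ≤ 0 its transform equals exp(αu/(β-u)) - e^{-α}. -/
/-! Expanding `I₁` in its power series writes the density of `m_{α,β}` as the Poisson mixture
`∑_{n ≥ 1} e^{-α} αⁿ / n! · γ_{n,β}` of Gamma(n, β) densities: `m_{α,β}` is the law of a compound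
Poisson sum of Exp(β) variables on the event that there is at least one summand. Each Gamma(n, β)
law has mass one and transform `(β / (β - u))ⁿ`, so the mass of `m_{α,β}` is
`∑_{n ≥ 1} e^{-α} αⁿ / n! = 1 - e^{-α}` and its transform is `e^{-α} (exp (αβ / (β - u)) - 1)`. -/

open MeasureTheory ENNReal

/-- Modified Bessel function of the first kind of order 1. -/
noncomputable def besselI1 (r : ℝ) : ℝ :=
  (r / 2) * ∑' k : ℕ, (r ^ 2 / 4) ^ k / (Nat.factorial k * Nat.factorial (k + 1))

/-- Absolutely continuous part of the Bessel distribution with parameters `α, β > 0`. -/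
noncomputable def besselACMeasure (α β : ℝ) : Measure ℝ :=
  (volume.restrict (Set.Ioi (0 : ℝ))).withDensity
    (fun x => ENNReal.ofReal
      (β * Real.exp (-α - β * x) * Real.sqrt (α / (β * x)) *
        besselI1 (2 * Real.sqrt (α * β * x))))

open ProbabilityTheory Set Filter Topology Complex
open scoped Nat

theorem integrableOn_pow_mul_cexp_neg_mul_Ioi {z : ℂ} (hz : 0 < z.re) (n : ℕ) :
    IntegrableOn (fun x : ℝ => (x : ℂ) ^ n * cexp (-(z * x))) (Ioi 0) := by
  have hreal : IntegrableOn (fun x : ℝ => x ^ (n : ℝ) * Real.exp (-z.re * x ^ (1 : ℝ))) (Ioi 0) :=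
    integrableOn_rpow_mul_exp_neg_mul_rpow (by linarith [n.cast_nonneg (α := ℝ)]) one_pos hz
  refine hreal.mono' (by fun_prop) ?_
  filter_upwards [ae_restrict_mem measurableSet_Ioi] with x (hx : 0 < x)
  simp [norm_exp, abs_of_pos hx]

theorem tendsto_pow_mul_cexp_neg_mul_atTop {z : ℂ} (hz : 0 < z.re) (n : ℕ) :
    Tendsto (fun x : ℝ => (x : ℂ) ^ n * cexp (-(z * x))) atTop (𝓝 0) := by
  refine squeeze_zero_norm' ?_ (tendsto_rpow_mul_exp_neg_mul_atTop_nhds_zero n z.re hz)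
  filter_upwards [eventually_ge_atTop 0] with x hx
  simp [norm_exp, abs_of_nonneg hx]

theorem integral_pow_mul_cexp_neg_mul_Ioi {z : ℂ} (hz : 0 < z.re) (n : ℕ) :
    ∫ x in Ioi (0 : ℝ), (x : ℂ) ^ n * cexp (-(z * x)) = n ! / z ^ (n + 1) := by
  have hz0 : z ≠ 0 := fun h => by simp [h] at hz
  induction n with
  | zero => simpa using integral_exp_mul_complex_Ioi (a := -z) (by simpa using hz) 0
  | succ n ih =>
    -- Integrating this derivative over `(0, ∞)` gives `(n + 1) Iₙ - z Iₙ₊₁ = 0`.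
    have hderiv : ∀ x ∈ Ici (0 : ℝ),
        HasDerivAt (fun x : ℝ => (x : ℂ) ^ (n + 1) * cexp (-(z * x)))
          ((n + 1) * ((x : ℂ) ^ n * cexp (-(z * x))) - z * ((x : ℂ) ^ (n + 1) * cexp (-(z * x))))
          x := by
      intro x _
      have hpow := (hasDerivAt_pow (n + 1) (x : ℂ)).comp_ofReal
      have hexp := ((hasDerivAt_id (x : ℂ)).const_mul z).fun_neg.cexp.comp_ofReal
      refine (hpow.fun_mul hexp).congr_deriv ?_
      simp only [id_eq, Nat.cast_add, Nat.cast_one, add_tsub_cancel_right, mul_one]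
      ring
    have hint := integrableOn_pow_mul_cexp_neg_mul_Ioi hz
    have key := integral_Ioi_of_hasDerivAt_of_tendsto' hderiv
      (((hint n).const_mul _).sub ((hint (n + 1)).const_mul z))
      (tendsto_pow_mul_cexp_neg_mul_atTop hz (n + 1))
    rw [integral_sub ((hint n).const_mul _) ((hint (n + 1)).const_mul z), integral_const_mul,
      integral_const_mul, ih] at key
    rw [eq_div_iff (pow_ne_zero _ hz0)]
    simp only [Complex.ofReal_zero, ne_eq, Nat.add_one_ne_zero, not_false_eq_true, zero_pow,
      zero_mul, sub_zero] at key
    field_simp at key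
    push_cast [Nat.factorial_succ]
    linear_combination -key

theorem gammaPDFReal_natCast_add_one {r x : ℝ} (n : ℕ) (hx : 0 ≤ x) :
    gammaPDFReal (n + 1) r x = r ^ (n + 1) / n ! * (x ^ n * Real.exp (-(r * x))) := by
  rw [gammaPDFReal, if_pos hx, add_sub_cancel_right, Real.Gamma_nat_eq_factorial,
    Real.rpow_natCast]
  norm_cast
  ring

theorem measurable_gammaPDF (a r : ℝ) : Measurable (gammaPDF a r) :=
  (measurable_gammaPDFReal a r).ennreal_ofReal

theorem withDensity_restrict_Ioi_gammaPDF (a r : ℝ) :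
    (volume.restrict (Ioi 0)).withDensity (gammaPDF a r) = gammaMeasure a r := by
  rw [← restrict_withDensity measurableSet_Ioi, ← gammaMeasure]
  refine Measure.restrict_eq_self_of_ae_mem ?_
  rw [gammaMeasure, ae_withDensity_iff (measurable_gammaPDF a r)]
  filter_upwards [Measure.ae_ne volume 0] with x hx0 hx
  exact lt_of_le_of_ne (not_lt.mp fun hneg => hx (gammaPDF_of_neg hneg)) hx0.symm

theorem integral_cexp_mul_gammaMeasure_natCast_add_one {r : ℝ} (hr : 0 < r) {u : ℂ}
    (hu : u.re < r) (n : ℕ) :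
    ∫ x, cexp (u * x) ∂gammaMeasure (n + 1) r = (r / (r - u)) ^ (n + 1) := by
  have hz : 0 < ((r : ℂ) - u).re := by simpa using hu
  rw [← withDensity_restrict_Ioi_gammaPDF, integral_withDensity_eq_integral_toReal_smul
    (measurable_gammaPDF _ r) (ae_of_all _ fun _ => ofReal_lt_top)]
  calc ∫ x in Ioi 0, (gammaPDF (n + 1) r x).toReal • cexp (u * x)
      = ∫ x in Ioi (0 : ℝ), (r ^ (n + 1) / n ! : ℂ) * ((x : ℂ) ^ n * cexp (-((r - u) * x))) := by
        refine setIntegral_congr_fun measurableSet_Ioi fun x (hx : 0 < x) => ?_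
        rw [gammaPDF, toReal_ofReal (gammaPDFReal_nonneg (by positivity) hr x),
          gammaPDFReal_natCast_add_one n hx.le, Complex.real_smul]
        push_cast
        rw [mul_assoc, mul_assoc, ← Complex.exp_add]
        ring_nf
    _ = (r / (r - u)) ^ (n + 1) := by
        rw [integral_const_mul, integral_pow_mul_cexp_neg_mul_Ioi hz, div_pow]
        field_simp [(Nat.cast_ne_zero (R := ℂ)).mpr n.factorial_ne_zero]

theorem hasSum_pow_succ_div_factorial {𝔸 : Type*} [NormedDivisionRing 𝔸] [NormedAlgebra ℚ 𝔸]
    [CompleteSpace 𝔸] (x : 𝔸) :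
    HasSum (fun n => x ^ (n + 1) / (n + 1)!) (NormedSpace.exp x - 1) := by
  simpa using (hasSum_nat_add_iff' 1).mpr (NormedSpace.expSeries_div_hasSum_exp x)

theorem summable_pow_div_factorial_mul_factorial_succ (t : ℝ) :
    Summable fun k : ℕ => t ^ k / (k ! * (k + 1)! : ℝ) := by
  refine (Real.summable_pow_div_factorial |t|).of_norm_bounded fun k => ?_
  rw [norm_div, norm_pow, Real.norm_eq_abs, Real.norm_of_nonneg (by positivity)]
  gcongr
  exact le_mul_of_one_le_right (by positivity) (mod_cast (k + 1).factorial_pos)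

theorem besselI1_two_mul_sqrt {t : ℝ} (ht : 0 ≤ t) :
    besselI1 (2 * √t) = √t * ∑' k : ℕ, t ^ k / (k ! * (k + 1)!) := by
  rw [besselI1, mul_pow, Real.sq_sqrt ht]
  ring_nf

theorem hasSum_besselAC_density {α β x : ℝ} (hα : 0 ≤ α) (hβ : 0 < β) (hx : 0 < x) :
    HasSum (fun n : ℕ => Real.exp (-α) * α ^ (n + 1) / (n + 1)! * gammaPDFReal (n + 1) β x)
      (β * Real.exp (-α - β * x) * √(α / (β * x)) * besselI1 (2 * √(α * β * x))) := by
  have hsqrt : √(α / (β * x)) * √(α * β * x) = α := by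
    rw [← Real.sqrt_mul (by positivity), show α / (β * x) * (α * β * x) = α ^ 2 by field_simp,
      Real.sqrt_sq hα]
  have hseries := (summable_pow_div_factorial_mul_factorial_succ (α * β * x)).hasSum.mul_left
    (β * Real.exp (-α - β * x) * α)
  rw [besselI1_two_mul_sqrt (by positivity), ← mul_assoc, mul_assoc _ _ √(α * β * x), hsqrt]
  refine hseries.congr_fun fun n => ?_
  rw [gammaPDFReal_natCast_add_one n hx.le, sub_eq_add_neg, Real.exp_add]
  field_simp
  ring

theorem besselACMeasure_eq_sum_gammaMeasure {α β : ℝ} (hα : 0 ≤ α) (hβ : 0 < β) :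
    besselACMeasure α β = Measure.sum fun n : ℕ =>
      ENNReal.ofReal (Real.exp (-α) * α ^ (n + 1) / (n + 1)!) • gammaMeasure (n + 1) β := by
  set w : ℕ → ℝ := fun n => Real.exp (-α) * α ^ (n + 1) / (n + 1)!
  have hw : ∀ n, 0 ≤ w n := fun n => by positivity
  have hdensity : (fun x => ENNReal.ofReal (β * Real.exp (-α - β * x) * √(α / (β * x)) *
      besselI1 (2 * √(α * β * x)))) =ᵐ[volume.restrict (Ioi 0)]
        ∑' n, ENNReal.ofReal (w n) • gammaPDF (n + 1) β := by
    filter_upwards [ae_restrict_mem measurableSet_Ioi] with x (hx : 0 < x)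
    have hsum := hasSum_besselAC_density hα hβ hx
    rw [← hsum.tsum_eq, ENNReal.ofReal_tsum_of_nonneg
      (fun n => mul_nonneg (hw n) (gammaPDFReal_nonneg (by positivity) hβ x)) hsum.summable,
      ENNReal.tsum_apply]
    simp only [Pi.smul_apply, smul_eq_mul, gammaPDF, ENNReal.ofReal_mul (hw _)]
  rw [besselACMeasure, withDensity_congr_ae hdensity,
    withDensity_tsum fun n => (measurable_gammaPDF _ β).const_smul _]
  simp_rw [withDensity_smul _ (measurable_gammaPDF _ β), withDensity_restrict_Ioi_gammaPDF]
  rfl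

theorem besselACMeasure_univ {α β : ℝ} (hα : 0 ≤ α) (hβ : 0 < β) :
    besselACMeasure α β univ = ENNReal.ofReal (1 - Real.exp (-α)) := by
  have hsum : HasSum (fun n : ℕ => Real.exp (-α) * α ^ (n + 1) / (n + 1)!)
      (1 - Real.exp (-α)) := by
    have h := (hasSum_pow_succ_div_factorial α).mul_left (Real.exp (-α))
    rw [← Real.exp_eq_exp_ℝ, mul_sub, ← Real.exp_add, neg_add_cancel, Real.exp_zero, mul_one] at h
    exact h.congr_fun fun n => by ring
  have := fun n : ℕ => isProbabilityMeasure_gammaMeasure (n.cast_add_one_pos (α := ℝ)) hβ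
  rw [besselACMeasure_eq_sum_gammaMeasure hα hβ, Measure.sum_apply _ MeasurableSet.univ,
    ← hsum.tsum_eq, ENNReal.ofReal_tsum_of_nonneg (fun n => by positivity) hsum.summable]
  simp

theorem integrable_cexp_mul_of_ae_nonneg {μ : Measure ℝ} [IsFiniteMeasure μ]
    (hμ : ∀ᵐ x ∂μ, 0 ≤ x) {u : ℂ} (hu : u.re ≤ 0) :
    Integrable (fun x : ℝ => cexp (u * x)) μ := by
  refine Integrable.of_bound (by fun_prop) 1 ?_
  filter_upwards [hμ] with x hx
  simpa [norm_exp] using mul_nonpos_of_nonpos_of_nonneg hu hx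

theorem integral_cexp_mul_besselACMeasure {α β : ℝ} (hα : 0 ≤ α) (hβ : 0 < β) {u : ℂ}
    (hu : u.re ≤ 0) :
    ∫ x, cexp (u * x) ∂besselACMeasure α β = cexp (α * u / (β - u)) - cexp (-α) := by
  have : IsFiniteMeasure (besselACMeasure α β) :=
    ⟨by rw [besselACMeasure_univ hα hβ]; exact ofReal_lt_top⟩
  have hpos : ∀ᵐ x ∂besselACMeasure α β, 0 ≤ x := by
    refine (withDensity_absolutelyContinuous _ _).ae_le ?_
    filter_upwards [ae_restrict_mem measurableSet_Ioi] with x hx using le_of_lt hx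
  have hint := integrable_cexp_mul_of_ae_nonneg hpos hu
  have hβu : (β : ℂ) - u ≠ 0 := fun h => by
    linarith [show β - u.re = 0 by simpa using congrArg Complex.re h]
  have hseries : HasSum (fun n : ℕ => (Real.exp (-α) * α ^ (n + 1) / (n + 1)! : ℝ) •
      ((β : ℂ) / (β - u)) ^ (n + 1)) (cexp (α * u / (β - u)) - cexp (-α)) := by
    have h := (hasSum_pow_succ_div_factorial ((α : ℂ) * (β / (β - u)))).mul_left (cexp (-α))
    rw [← Complex.exp_eq_exp_ℂ, mul_sub, ← Complex.exp_add, mul_one,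
      show -(α : ℂ) + α * (β / (β - u)) = α * u / (β - u) by field_simp; ring] at h
    exact h.congr_fun fun n => by rw [Complex.real_smul]; push_cast; ring
  rw [besselACMeasure_eq_sum_gammaMeasure hα hβ] at hint ⊢
  rw [integral_sum_measure hint, ← hseries.tsum_eq]
  refine tsum_congr fun n => ?_
  rw [integral_smul_measure, toReal_ofReal (by positivity),
    integral_cexp_mul_gammaMeasure_natCast_add_one hβ (by linarith) n]

/-- The absolutely continuous part `m_{α,β}` of the Bessel distribution has total mass
`1 - e^{-α}`, and for `Re u ≤ 0` its transform equals `exp(αu/(β-u)) - e^{-α}`. -/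
theorem besselAC_mass_and_transform (α β : ℝ) (hα : 0 < α) (hβ : 0 < β) :
    besselACMeasure α β Set.univ = ENNReal.ofReal (1 - Real.exp (-α)) ∧
    ∀ u : ℂ, u.re ≤ 0 →
      ∫ x : ℝ, Complex.exp (u * x) ∂(besselACMeasure α β) =
        Complex.exp ((α : ℂ) * u / ((β : ℂ) - u)) - Complex.exp (-(α : ℂ)) :=
  ⟨besselACMeasure_univ hα.le hβ, fun _ hu => integral_cexp_mul_besselACMeasure hα.le hβ hu⟩
end

section
/- Let Z_t ≥ 0 be a random variable whose Laplace transform is E[e^{uZ_t}] = exp(Δ(u)) for u ≤ 0, where Δ(u) = ∫₀^t ∫_{(0,∞)}(e^{ξue^{-as}/(1-(σ²/(2a))(1-e^{-as})u)} - 1) ν(dξ) ds and ∫_{(0,∞)} ξ ν(dξ) < ∞. Then E[Z_t] ≤ ((1-e^{-at})/a) ∫_{(0,∞)} ξ ν(dξ) < ∞. -/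
/-!
For `v > 0`, the Laplace transform gives `E[(1 - e^{-vZ})/v] = (1 - e^{Δ(-v)})/v ≤ -Δ(-v)/v`.
On `u ≤ 0` the denominator in the exponent of `Δ(u)` is at least `1`, so `e^y - 1 ≥ y` bounds the
integrand of `Δ(-v)` below by `-v ξ e^{-as}`, whence `-Δ(-v)/v ≤ ∫₀ᵗ e^{-as} ds ∫ ξ ν(dξ)`.
As `v ↓ 0`, `(1 - e^{-vZ})/v → Z`, and Fatou's lemma transfers the bound to `E[Z]`.
-/

open MeasureTheory ENNReal Filter Topology Set Real

theorem setIntegral_Ioo_exp_neg_mul {a : ℝ} (ha : a ≠ 0) {t : ℝ} (ht : 0 ≤ t) :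
    ∫ s in Ioo 0 t, exp (-a * s) = (1 - exp (-a * t)) / a := by
  rw [← integral_Ioc_eq_integral_Ioo, ← intervalIntegral.integral_of_le ht,
    intervalIntegral.integral_comp_mul_left exp (neg_ne_zero.2 ha), integral_exp]
  simp only [mul_zero, exp_zero, smul_eq_mul]
  field_simp
  ring

theorem exp_div_sub_one_mem_Icc {x D : ℝ} (hx : x ≤ 0) (hD : 1 ≤ D) :
    exp (x / D) - 1 ∈ Icc x 0 := by
  have hxD : x ≤ x / D := by rw [le_div_iff₀ (by linarith)]; nlinarith
  have hxD0 : x / D ≤ 0 := div_nonpos_of_nonpos_of_nonneg hx (by linarith)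
  exact ⟨by linarith [add_one_le_exp (x / D)], by linarith [exp_le_one_iff.2 hxD0]⟩

theorem integral_mono_of_nonpos {α : Type*} [MeasurableSpace α] {μ : Measure α} {f g : α → ℝ}
    (hg : Integrable g μ) (hgf : g ≤ᵐ[μ] f) (hf : f ≤ᵐ[μ] 0) : ∫ a, g a ∂μ ≤ ∫ a, f a ∂μ := by
  have := integral_mono_of_nonneg (f := -f) (g := -g)
    (by filter_upwards [hf] with a h using neg_nonneg.2 h) hg.neg
    (by filter_upwards [hgf] with a h using neg_le_neg h)
  simpa [integral_neg] using this

theorem setIntegral_exp_mul_div_sub_one_mem_Icc {ν : Measure ℝ}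
    (hI : IntegrableOn (fun ξ => ξ) (Ioi 0) ν) {u c D : ℝ} (hu : u ≤ 0) (hc : 0 ≤ c)
    (hD : 1 ≤ D) :
    ∫ ξ in Ioi 0, (exp (ξ * u * c / D) - 1) ∂ν ∈ Icc (u * c * ∫ ξ in Ioi 0, ξ ∂ν) 0 := by
  have hmem : ∀ ξ ∈ Ioi (0 : ℝ), exp (ξ * u * c / D) - 1 ∈ Icc (ξ * u * c) 0 := fun ξ hξ =>
    exp_div_sub_one_mem_Icc
      (mul_nonpos_of_nonpos_of_nonneg (mul_nonpos_of_nonneg_of_nonpos (le_of_lt hξ) hu) hc) hD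
  have hlin : ∫ ξ in Ioi 0, ξ * u * c ∂ν = u * c * ∫ ξ in Ioi 0, ξ ∂ν := by
    rw [integral_mul_const, integral_mul_const]; ring
  refine ⟨hlin ▸ integral_mono_of_nonpos ((hI.mul_const u).mul_const c) ?_ ?_,
    setIntegral_nonpos measurableSet_Ioi fun ξ hξ => (hmem ξ hξ).2⟩
  · exact (ae_restrict_iff' measurableSet_Ioi).2 (.of_forall fun ξ hξ => (hmem ξ hξ).1)
  · exact (ae_restrict_iff' measurableSet_Ioi).2 (.of_forall fun ξ hξ => (hmem ξ hξ).2)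

theorem one_le_one_sub_mul_one_sub_exp_mul (σ : ℝ) {a s u : ℝ} (ha : 0 < a) (hs : 0 ≤ s)
    (hu : u ≤ 0) : 1 ≤ 1 - σ ^ 2 / (2 * a) * (1 - exp (-a * s)) * u := by
  have hexp : exp (-a * s) ≤ 1 := exp_le_one_iff.2 (by nlinarith)
  have hcoef : 0 ≤ σ ^ 2 / (2 * a) * (1 - exp (-a * s)) :=
    mul_nonneg (by positivity) (by linarith)
  nlinarith

-- `Δ(u)` in `E[e^{u Z_t}] = exp (Δ(u))`
noncomputable def jcirLaplaceExponent (a σ t : ℝ) (ν : Measure ℝ) (u : ℝ) : ℝ :=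
  ∫ s in Ioo 0 t, ∫ ξ in Ioi 0,
    (exp (ξ * u * exp (-a * s) / (1 - σ ^ 2 / (2 * a) * (1 - exp (-a * s)) * u)) - 1) ∂ν

theorem mul_le_jcirLaplaceExponent {a t : ℝ} (ha : 0 < a) (ht : 0 ≤ t) (σ : ℝ) {ν : Measure ℝ}
    (hI : IntegrableOn (fun ξ => ξ) (Ioi 0) ν) {u : ℝ} (hu : u ≤ 0) :
    u * ((1 - exp (-a * t)) / a * ∫ ξ in Ioi 0, ξ ∂ν) ≤ jcirLaplaceExponent a σ t ν u := by
  have hinner : ∀ s ∈ Ioo 0 t, _ := fun s (hs : s ∈ Ioo 0 t) =>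
    setIntegral_exp_mul_div_sub_one_mem_Icc hI hu (exp_pos (-a * s)).le
      (one_le_one_sub_mul_one_sub_exp_mul σ ha hs.1.le hu)
  have hg : IntegrableOn (fun s => u * exp (-a * s) * ∫ ξ in Ioi 0, ξ ∂ν) (Ioo 0 t) :=
    (Continuous.integrableOn_Icc (by fun_prop)).mono_set Ioo_subset_Icc_self
  have hlin : ∫ s in Ioo 0 t, u * exp (-a * s) * ∫ ξ in Ioi 0, ξ ∂ν =
      u * ((1 - exp (-a * t)) / a * ∫ ξ in Ioi 0, ξ ∂ν) := by
    rw [integral_mul_const, integral_const_mul, setIntegral_Ioo_exp_neg_mul ha.ne' ht]; ring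
  rw [← hlin]
  refine integral_mono_of_nonpos hg ?_ ?_
  · exact (ae_restrict_iff' measurableSet_Ioo).2 (.of_forall fun s hs => (hinner s hs).1)
  · exact (ae_restrict_iff' measurableSet_Ioo).2 (.of_forall fun s hs => (hinner s hs).2)

theorem tendsto_one_sub_exp_neg_mul_div (x : ℝ) :
    Tendsto (fun v => (1 - exp (-v * x)) / v) (𝓝[>] 0) (𝓝 x) := by
  have hderiv : HasDerivAt (fun v => 1 - exp (-v * x)) x 0 := by
    simpa using (((hasDerivAt_id (0 : ℝ)).neg.mul_const x).exp).const_sub 1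
  refine hderiv.tendsto_slope_zero_right.congr fun v => ?_
  simp [div_eq_inv_mul]

theorem lintegral_ofReal_le_of_forall_pos_lintegral_le {Ω : Type*} [MeasurableSpace Ω]
    {μ : Measure Ω} {Z : Ω → ℝ} (hZ : Measurable Z) {B : ℝ≥0∞}
    (hB : ∀ v > 0, ∫⁻ ω, ENNReal.ofReal ((1 - exp (-v * Z ω)) / v) ∂μ ≤ B) :
    ∫⁻ ω, ENNReal.ofReal (Z ω) ∂μ ≤ B :=
  calc ∫⁻ ω, ENNReal.ofReal (Z ω) ∂μ
      = ∫⁻ ω, liminf (fun v => ENNReal.ofReal ((1 - exp (-v * Z ω)) / v)) (𝓝[>] 0) ∂μ := by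
        refine lintegral_congr fun ω => ?_
        exact (ENNReal.tendsto_ofReal (tendsto_one_sub_exp_neg_mul_div (Z ω))).liminf_eq.symm
    _ ≤ liminf (fun v => ∫⁻ ω, ENNReal.ofReal ((1 - exp (-v * Z ω)) / v) ∂μ) (𝓝[>] 0) :=
        lintegral_liminf_le fun v => by fun_prop
    _ ≤ B := liminf_le_of_le (by isBoundedDefault) fun b hb => by
        obtain ⟨v, hbv, hv⟩ := (hb.and self_mem_nhdsWithin).exists
        exact hbv.trans (hB v hv)

theorem lintegral_ofReal_one_sub_exp_neg_mul_div {Ω : Type*} [MeasurableSpace Ω]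
    {μ : Measure Ω} [IsProbabilityMeasure μ] {Z : Ω → ℝ} (hZ : Measurable Z)
    (hZ0 : ∀ ω, 0 ≤ Z ω) {v : ℝ} (hv : 0 < v) :
    ∫⁻ ω, ENNReal.ofReal ((1 - exp (-v * Z ω)) / v) ∂μ =
      ENNReal.ofReal ((1 - ∫ ω, exp (-v * Z ω) ∂μ) / v) := by
  have hexp_le : ∀ ω, exp (-v * Z ω) ≤ 1 := fun ω =>
    exp_le_one_iff.2 (mul_nonpos_of_nonpos_of_nonneg (by linarith) (hZ0 ω))
  have hint : Integrable (fun ω => exp (-v * Z ω)) μ :=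
    Integrable.mono' (integrable_const 1) (by fun_prop) (.of_forall fun ω => by
      rw [norm_of_nonneg (exp_pos _).le]; exact hexp_le ω)
  have hf : Integrable (fun ω => (1 - exp (-v * Z ω)) / v) μ :=
    ((integrable_const 1).sub hint).div_const v
  rw [← ofReal_integral_eq_lintegral_ofReal hf
      (.of_forall fun ω => div_nonneg (sub_nonneg.2 (hexp_le ω)) hv.le),
    integral_div, integral_sub (integrable_const 1) hint]
  simp

theorem expectation_Z_bound_general (a σ t : ℝ) (ha : 0 < a) (ht : 0 < t)
    (ν : Measure ℝ)
    (hν : ∫⁻ ξ in Set.Ioi (0 : ℝ), ENNReal.ofReal ξ ∂ν < ⊤)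
    {Ω : Type*} [MeasureSpace Ω] [IsProbabilityMeasure (volume : Measure Ω)]
    (Z : Ω → ℝ) (hZmeas : Measurable Z) (hZpos : ∀ ω, 0 ≤ Z ω)
    (hlaplace : ∀ u : ℝ, u ≤ 0 →
      ∫ ω, Real.exp (u * Z ω) =
        Real.exp (∫ s in Set.Ioo (0 : ℝ) t, ∫ ξ in Set.Ioi (0 : ℝ),
          (Real.exp (ξ * u * Real.exp (-a * s) /
            (1 - σ ^ 2 / (2 * a) * (1 - Real.exp (-a * s)) * u)) - 1) ∂ν)) :
    ∫⁻ ω, ENNReal.ofReal (Z ω) ≤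
      ENNReal.ofReal ((1 - Real.exp (-a * t)) / a * ∫ ξ in Set.Ioi (0 : ℝ), ξ ∂ν) := by
  have hI : IntegrableOn (fun ξ => ξ) (Ioi 0) ν :=
    ⟨by fun_prop, (hasFiniteIntegral_iff_ofReal
      ((ae_restrict_iff' measurableSet_Ioi).2 (.of_forall fun _ hξ => le_of_lt hξ))).2 hν⟩
  refine lintegral_ofReal_le_of_forall_pos_lintegral_le hZmeas fun v hv => ?_
  have hΔ := mul_le_jcirLaplaceExponent ha ht.le σ hI (u := -v) (by linarith)
  have hlap : ∫ ω, exp (-v * Z ω) = exp (jcirLaplaceExponent a σ t ν (-v)) :=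
    hlaplace (-v) (by linarith)
  rw [lintegral_ofReal_one_sub_exp_neg_mul_div hZmeas hZpos hv, hlap]
  refine ENNReal.ofReal_le_ofReal ((div_le_iff₀ hv).2 ?_)
  linarith [add_one_le_exp (jcirLaplaceExponent a σ t ν (-v))]

/-- If `Z_t ≥ 0` has Laplace transform `E[e^{uZ_t}] = exp(Δ(u))` for `u ≤ 0` with `Δ` as in
the JCIR pure-jump part and `∫ ξ ν(dξ) < ∞`, then
`E[Z_t] ≤ ((1-e^{-at})/a) ∫ ξ ν(dξ) < ∞`. -/
theorem expectation_Z_bound (a σ t : ℝ) (ha : 0 < a) (hσ : 0 < σ) (ht : 0 < t)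
    (ν : Measure ℝ)
    (hν : ∫⁻ ξ in Set.Ioi (0 : ℝ), ENNReal.ofReal ξ ∂ν < ⊤)
    {Ω : Type*} [MeasureSpace Ω] [IsProbabilityMeasure (volume : Measure Ω)]
    (Z : Ω → ℝ) (hZmeas : Measurable Z) (hZpos : ∀ ω, 0 ≤ Z ω)
    (hlaplace : ∀ u : ℝ, u ≤ 0 →
      ∫ ω, Real.exp (u * Z ω) =
        Real.exp (∫ s in Set.Ioo (0 : ℝ) t, ∫ ξ in Set.Ioi (0 : ℝ),
          (Real.exp (ξ * u * Real.exp (-a * s) /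
            (1 - σ ^ 2 / (2 * a) * (1 - Real.exp (-a * s)) * u)) - 1) ∂ν)) :
    ∫⁻ ω, ENNReal.ofReal (Z ω) ≤
      ENNReal.ofReal ((1 - Real.exp (-a * t)) / a * ∫ ξ in Set.Ioi (0 : ℝ), ξ ∂ν) :=
  expectation_Z_bound_general a σ t ha ht ν hν Z hZmeas hZpos hlaplace
end
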